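/- Under the elliptical potential setting, Σ_{m=1}^M n_m · ‖c_m‖_{V_m⁻¹} ≤ √τ · √(2·d·log(1 + τ/(λ·d))). -/

import Mathlib

/-!
The log-determinant of the design matrix grows by `log (1 + n_m ‖c_m‖²_{V_m⁻¹})` at each step
(matrix determinant lemma), and as long as `n_m ‖c_m‖²_{V_m⁻¹} ≤ 2` this increment dominates half of
`n_m ‖c_m‖²_{V_m⁻¹}`. Bounding the final determinant by AM-GM on the eigenvalues,
`det V_{M+1} ≤ (tr V_{M+1} / d)^d ≤ (λ + τ/d)^d`, gives
`∑ n_m ‖c_m‖²_{V_m⁻¹} ≤ 2 d log (1 + τ/(λd))`, and Cauchy-Schwarz takes the square root.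
-/

open Matrix Finset Real

theorem Real.le_two_mul_log_one_add {x : ℝ} (h0 : 0 ≤ x) (h2 : x ≤ 2) :
    x ≤ 2 * log (1 + x) :=
  calc x ≤ 2 * (2 * x / (x + 2)) := by
        rw [mul_div_assoc', le_div_iff₀ (by linarith)]
        nlinarith
    _ ≤ 2 * log (1 + x) := by gcongr; exact le_log_one_add_of_nonneg h0

theorem Real.sum_mul_sqrt_le_sqrt_mul_sqrt {ι : Type*} (s : Finset ι) {w x : ι → ℝ}
    (hw : ∀ i ∈ s, 0 ≤ w i) (hx : ∀ i ∈ s, 0 ≤ x i) :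
    ∑ i ∈ s, w i * √(x i) ≤ √(∑ i ∈ s, w i) * √(∑ i ∈ s, w i * x i) := by
  have hw2 : ∑ i ∈ s, √(w i) ^ 2 = ∑ i ∈ s, w i :=
    sum_congr rfl fun i hi => sq_sqrt (hw i hi)
  have hwx2 : ∑ i ∈ s, (√(w i) * √(x i)) ^ 2 = ∑ i ∈ s, w i * x i :=
    sum_congr rfl fun i hi => by rw [mul_pow, sq_sqrt (hw i hi), sq_sqrt (hx i hi)]
  have hlhs : ∑ i ∈ s, √(w i) * (√(w i) * √(x i)) = ∑ i ∈ s, w i * √(x i) :=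
    sum_congr rfl fun i hi => by rw [← mul_assoc, mul_self_sqrt (hw i hi)]
  simpa only [hw2, hwx2, hlhs] using
    sum_mul_le_sqrt_mul_sqrt s (fun i => √(w i)) (fun i => √(w i) * √(x i))

theorem Real.prod_le_sum_div_card_pow {ι : Type*} (s : Finset ι) {z : ι → ℝ}
    (hz : ∀ i ∈ s, 0 ≤ z i) : ∏ i ∈ s, z i ≤ ((∑ i ∈ s, z i) / #s) ^ #s := by
  rcases s.eq_empty_or_nonempty with rfl | hs
  · simp
  have hcard : (#s : ℝ) ≠ 0 := Nat.cast_ne_zero.mpr hs.card_ne_zero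
  have amgm := geom_mean_le_arith_mean_weighted s (fun _ => (#s : ℝ)⁻¹) z
    (fun _ _ => by positivity) (by simp [hcard]) hz
  calc ∏ i ∈ s, z i = (∏ i ∈ s, z i ^ (#s : ℝ)⁻¹) ^ #s := by
        rw [← prod_pow]
        refine prod_congr rfl fun i hi => ?_
        rw [← rpow_natCast, ← rpow_mul (hz i hi), inv_mul_cancel₀ hcard, rpow_one]
    _ ≤ ((∑ i ∈ s, z i) / #s) ^ #s := by
        gcongr
        · exact prod_nonneg fun i hi => rpow_nonneg (hz i hi) _
        · simpa [← mul_sum, div_eq_inv_mul] using amgm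

namespace Matrix

variable {ι : Type*} [Fintype ι] [DecidableEq ι]

theorem PosSemidef.det_le_trace_div_card_pow {A : Matrix ι ι ℝ} (hA : A.PosSemidef) :
    A.det ≤ (A.trace / Fintype.card ι) ^ Fintype.card ι := by
  have hH := hA.isHermitian
  rw [hH.det_eq_prod_eigenvalues, hH.trace_eq_sum_eigenvalues]
  simpa using prod_le_sum_div_card_pow univ fun i _ => hA.eigenvalues_nonneg i

theorem det_add_vecMulVec {R : Type*} [CommRing R] {A : Matrix ι ι R} (hA : IsUnit A.det)
    (u v : ι → R) : (A + vecMulVec u v).det = A.det * (1 + v ⬝ᵥ A⁻¹ *ᵥ u) := by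
  rw [vecMulVec_eq Unit, det_add_replicateCol_mul_replicateRow hA,
    det_unique (1 + replicateRow Unit v * A⁻¹ * replicateCol Unit u), add_apply,
    one_apply_eq, ← replicateRow_vecMul, replicateRow_mul_replicateCol_apply,
    ← dotProduct_mulVec]

end Matrix

namespace EllipticalPotential

variable {ι : Type*} [Fintype ι] [DecidableEq ι] {lam : ℝ} {w : ℕ → ℝ} {c : ℕ → ι → ℝ}
  {V : ℕ → Matrix ι ι ℝ} {M : ℕ}

theorem posDef (hlam : 0 < lam) (hw : ∀ m, 0 ≤ w m) (hV1 : V 1 = lam • 1)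
    (hVrec : ∀ m, 1 ≤ m → m ≤ M → V (m + 1) = V m + w m • vecMulVec (c m) (c m))
    {m : ℕ} (hm1 : 1 ≤ m) (hmM : m ≤ M + 1) : (V m).PosDef := by
  induction m, hm1 using Nat.le_induction with
  | base => rw [hV1]; exact PosDef.one.smul hlam
  | succ m hm ih =>
    rw [hVrec m hm (by omega)]
    exact (ih (by omega)).add_posSemidef <| by
      simpa using (posSemidef_vecMulVec_self_star (c m)).smul (hw m)

theorem quadForm_nonneg (hlam : 0 < lam) (hw : ∀ m, 0 ≤ w m) (hV1 : V 1 = lam • 1)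
    (hVrec : ∀ m, 1 ≤ m → m ≤ M → V (m + 1) = V m + w m • vecMulVec (c m) (c m))
    {m : ℕ} (hm1 : 1 ≤ m) (hmM : m ≤ M + 1) : 0 ≤ c m ⬝ᵥ (V m)⁻¹ *ᵥ c m := by
  simpa using (posDef hlam hw hV1 hVrec hm1 hmM).inv.posSemidef.dotProduct_mulVec_nonneg (c m)

theorem det_succ (hlam : 0 < lam) (hw : ∀ m, 0 ≤ w m) (hV1 : V 1 = lam • 1)
    (hVrec : ∀ m, 1 ≤ m → m ≤ M → V (m + 1) = V m + w m • vecMulVec (c m) (c m))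
    {m : ℕ} (hmM : m ≤ M) :
    (V (m + 1)).det =
      lam ^ Fintype.card ι * ∏ k ∈ Icc 1 m, (1 + w k * (c k ⬝ᵥ (V k)⁻¹ *ᵥ c k)) := by
  induction m with
  | zero => simp [hV1]
  | succ m ih =>
    have hunit := (posDef hlam hw hV1 hVrec (Nat.le_add_left 1 m) (by omega)).det_pos.ne'.isUnit
    rw [hVrec (m + 1) (by omega) hmM, ← smul_vecMulVec, det_add_vecMulVec hunit, ih (by omega),
      prod_Icc_succ_top (by omega), mulVec_smul, dotProduct_smul, smul_eq_mul, mul_assoc]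

theorem trace_succ
    (hV1 : V 1 = lam • 1)
    (hVrec : ∀ m, 1 ≤ m → m ≤ M → V (m + 1) = V m + w m • vecMulVec (c m) (c m))
    {m : ℕ} (hmM : m ≤ M) :
    (V (m + 1)).trace = lam * Fintype.card ι + ∑ k ∈ Icc 1 m, w k * (c k ⬝ᵥ c k) := by
  induction m with
  | zero => simp [hV1]
  | succ m ih =>
    rw [hVrec (m + 1) (by omega) hmM, trace_add, trace_smul, trace_vecMulVec, ih (by omega),
      sum_Icc_succ_top (by omega), smul_eq_mul, add_assoc]

theorem prod_one_add_le (hlam : 0 < lam) (hw : ∀ m, 0 ≤ w m)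
    (hc : ∀ m, 1 ≤ m → m ≤ M → c m ⬝ᵥ c m ≤ 1) (hV1 : V 1 = lam • 1)
    (hVrec : ∀ m, 1 ≤ m → m ≤ M → V (m + 1) = V m + w m • vecMulVec (c m) (c m)) :
    ∏ m ∈ Icc 1 M, (1 + w m * (c m ⬝ᵥ (V m)⁻¹ *ᵥ c m)) ≤
      (1 + (∑ m ∈ Icc 1 M, w m) / (lam * Fintype.card ι)) ^ Fintype.card ι := by
  set d : ℝ := (Fintype.card ι : ℝ)
  set τ := ∑ m ∈ Icc 1 M, w m
  have htrace : (V (M + 1)).trace ≤ lam * d + τ := by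
    rw [trace_succ hV1 hVrec le_rfl]
    refine add_le_add_right (sum_le_sum fun m hm => ?_) _
    rw [mem_Icc] at hm
    exact mul_le_of_le_one_right (hw m) (hc m hm.1 hm.2)
  have hmean : (V (M + 1)).trace / d ≤ lam * (1 + τ / (lam * d)) :=
    calc (V (M + 1)).trace / d ≤ (lam * d + τ) / d := by gcongr
      _ = lam * (d / d) + τ / d := by ring
      -- `d / d ≤ 1` also holds for `d = 0`, so the empty index type needs no separate case
      _ ≤ lam * 1 + τ / d := by gcongr; exact div_self_le_one d
      _ = lam * (1 + τ / (lam * d)) := by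
        rw [mul_add, mul_div_assoc', mul_div_mul_left _ _ hlam.ne']
  have hpsd := (posDef hlam hw hV1 hVrec (Nat.le_add_left 1 M) le_rfl).posSemidef
  refine le_of_mul_le_mul_left ?_ (pow_pos hlam (Fintype.card ι))
  calc lam ^ Fintype.card ι * ∏ m ∈ Icc 1 M, (1 + w m * (c m ⬝ᵥ (V m)⁻¹ *ᵥ c m))
      = (V (M + 1)).det := (det_succ hlam hw hV1 hVrec le_rfl).symm
    _ ≤ ((V (M + 1)).trace / d) ^ Fintype.card ι := hpsd.det_le_trace_div_card_pow
    _ ≤ (lam * (1 + τ / (lam * d))) ^ Fintype.card ι := by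
        gcongr
        exact div_nonneg hpsd.trace_nonneg (Nat.cast_nonneg _)
    _ = lam ^ Fintype.card ι * (1 + τ / (lam * d)) ^ Fintype.card ι := mul_pow _ _ _

theorem sum_mul_quadForm_le (hlam : 0 < lam) (hw : ∀ m, 0 ≤ w m)
    (hc : ∀ m, 1 ≤ m → m ≤ M → c m ⬝ᵥ c m ≤ 1) (hV1 : V 1 = lam • 1)
    (hVrec : ∀ m, 1 ≤ m → m ≤ M → V (m + 1) = V m + w m • vecMulVec (c m) (c m))
    (hsmall : ∀ m, 1 ≤ m → m ≤ M → w m * (c m ⬝ᵥ (V m)⁻¹ *ᵥ c m) ≤ 2) :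
    ∑ m ∈ Icc 1 M, w m * (c m ⬝ᵥ (V m)⁻¹ *ᵥ c m) ≤
      2 * Fintype.card ι * log (1 + (∑ m ∈ Icc 1 M, w m) / (lam * Fintype.card ι)) := by
  have hgain : ∀ m ∈ Icc 1 M, 0 ≤ w m * (c m ⬝ᵥ (V m)⁻¹ *ᵥ c m) := fun m hm => by
    rw [mem_Icc] at hm
    exact mul_nonneg (hw m) (quadForm_nonneg hlam hw hV1 hVrec hm.1 (by omega))
  calc ∑ m ∈ Icc 1 M, w m * (c m ⬝ᵥ (V m)⁻¹ *ᵥ c m)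
      ≤ ∑ m ∈ Icc 1 M, 2 * log (1 + w m * (c m ⬝ᵥ (V m)⁻¹ *ᵥ c m)) := by
        refine sum_le_sum fun m hm => le_two_mul_log_one_add (hgain m hm) ?_
        rw [mem_Icc] at hm
        exact hsmall m hm.1 hm.2
    _ = 2 * log (∏ m ∈ Icc 1 M, (1 + w m * (c m ⬝ᵥ (V m)⁻¹ *ᵥ c m))) := by
        rw [← mul_sum, log_prod fun m hm => by linarith [hgain m hm]]
    _ ≤ 2 * log ((1 + (∑ m ∈ Icc 1 M, w m) / (lam * Fintype.card ι)) ^ Fintype.card ι) := by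
        gcongr
        · exact prod_pos fun m hm => by linarith [hgain m hm]
        · exact prod_one_add_le hlam hw hc hV1 hVrec
    _ = _ := by rw [log_pow, mul_assoc]

end EllipticalPotential

theorem elliptical_potential_sqrt_sum_general {d M : ℕ} (lam : ℝ) (hlam : 1 ≤ lam)
    (c : ℕ → Fin d → ℝ) (n : ℕ → ℕ)
    (V : ℕ → Matrix (Fin d) (Fin d) ℝ)
    (hc : ∀ m, 1 ≤ m → m ≤ M → Real.sqrt (∑ k, c m k ^ 2) ≤ 1)
    (hV1 : V 1 = lam • (1 : Matrix (Fin d) (Fin d) ℝ))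
    (hVrec : ∀ m, 1 ≤ m → m ≤ M →
      V (m + 1) = V m + (n m : ℝ) • vecMulVec (c m) (c m))
    (hsmall : ∀ m, 1 ≤ m → m ≤ M →
      (n m : ℝ) * (c m ⬝ᵥ (V m)⁻¹.mulVec (c m)) ≤ 1) :
    ∑ m ∈ Finset.Icc 1 M, (n m : ℝ) * Real.sqrt (c m ⬝ᵥ (V m)⁻¹.mulVec (c m)) ≤
      Real.sqrt ((∑ m ∈ Finset.Icc 1 M, n m : ℕ) : ℝ) *
        Real.sqrt (2 * d *
          Real.log (1 + ((∑ m ∈ Finset.Icc 1 M, n m : ℕ) : ℝ) / (lam * d))) := by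
  have hlam0 : 0 < lam := by linarith
  have hn : ∀ m, 0 ≤ (n m : ℝ) := fun m => Nat.cast_nonneg _
  have hnorm : ∀ m, 1 ≤ m → m ≤ M → c m ⬝ᵥ c m ≤ 1 := fun m h1 h2 => by
    simpa [dotProduct, sq] using hc m h1 h2
  have hquad : ∀ m ∈ Icc 1 M, 0 ≤ c m ⬝ᵥ (V m)⁻¹ *ᵥ c m := fun m hm => by
    rw [mem_Icc] at hm
    exact EllipticalPotential.quadForm_nonneg hlam0 hn hV1 hVrec hm.1 (by omega)
  have hpotential := EllipticalPotential.sum_mul_quadForm_le hlam0 hn hnorm hV1 hVrec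
    fun m h1 h2 => (hsmall m h1 h2).trans one_le_two
  rw [Fintype.card_fin] at hpotential
  push_cast
  calc _ ≤ √(∑ m ∈ Icc 1 M, (n m : ℝ)) * √(∑ m ∈ Icc 1 M, n m * (c m ⬝ᵥ (V m)⁻¹ *ᵥ c m)) :=
        sum_mul_sqrt_le_sqrt_mul_sqrt _ (fun m _ => hn m) hquad
    _ ≤ _ := mul_le_mul_of_nonneg_left (sqrt_le_sqrt hpotential) (sqrt_nonneg _)

/-- Elliptical potential lemma (weighted norms):
`∑_{m=1}^M n_m ‖c_m‖_{V_m⁻¹} ≤ √τ √(2 d log (1 + τ/(λ d)))`. -/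
theorem elliptical_potential_sqrt_sum {d M : ℕ} (hd : 1 ≤ d) (lam : ℝ) (hlam : 1 ≤ lam)
    (c : ℕ → Fin d → ℝ) (n : ℕ → ℕ)
    (V : ℕ → Matrix (Fin d) (Fin d) ℝ)
    (hc : ∀ m, 1 ≤ m → m ≤ M → Real.sqrt (∑ k, c m k ^ 2) ≤ 1)
    (hV1 : V 1 = lam • (1 : Matrix (Fin d) (Fin d) ℝ))
    (hVrec : ∀ m, 1 ≤ m → m ≤ M →
      V (m + 1) = V m + (n m : ℝ) • vecMulVec (c m) (c m))
    (hsmall : ∀ m, 1 ≤ m → m ≤ M →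
      (n m : ℝ) * (c m ⬝ᵥ (V m)⁻¹.mulVec (c m)) ≤ 1) :
    ∑ m ∈ Finset.Icc 1 M, (n m : ℝ) * Real.sqrt (c m ⬝ᵥ (V m)⁻¹.mulVec (c m)) ≤
      Real.sqrt ((∑ m ∈ Finset.Icc 1 M, n m : ℕ) : ℝ) *
        Real.sqrt (2 * d *
          Real.log (1 + ((∑ m ∈ Finset.Icc 1 M, n m : ℕ) : ℝ) / (lam * d))) :=
  elliptical_potential_sqrt_sum_general lam hlam c n V hc hV1 hVrec hsmall
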